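/- arXiv:0710.1151 — 9 statements merged into one kernel-verified Lean document; each statement's English description precedes it below -/
import Mathlib

section
/- Let P be a probability measure on a measurable space Ω and let r : Ω → [0,∞) be measurable. For γ ∈ [0,1] define D_γ = {ω₀ ∈ Ω : P({ω : r(ω) > r(ω₀)}) ≤ γ}. Then D_γ is measurable and P(D_γ) ≥ γ. -/
/-!
The region is the preimage under `r` of the upper set `A = {t | P (r > t) ≤ γ}`, hence measurable.
An upper set of a linear order is the intersection of the rays `(s, ∞)` over `s ∉ A`; this is a
decreasing family over a countably generated index set, so continuity from above gives
`P (r ∈ A) = ⨅ s ∉ A, P (r > s) ≥ γ`.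
-/

open MeasureTheory Set
open scoped ENNReal

theorem IsUpperSet.eq_iInter_Ioi_compl {β : Type*} [LinearOrder β] {A : Set β}
    (hA : IsUpperSet A) : A = ⋂ s : ↥Aᶜ, Ioi (s : β) := by
  ext t
  simp only [mem_iInter, mem_Ioi, Subtype.forall, mem_compl_iff]
  exact ⟨fun ht s hs => lt_of_not_ge fun hts => hs (hA hts ht),
    fun h => by_contra fun ht => (h t ht).false⟩

theorem le_measure_preimage_of_isUpperSet {α β : Type*} [MeasurableSpace α] {μ : Measure α}
    [IsFiniteMeasure μ] [LinearOrder β] [TopologicalSpace β] [OrderTopology β]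
    [SecondCountableTopology β] [MeasurableSpace β] [OpensMeasurableSpace β] {f : α → β}
    (hf : Measurable f) {A : Set β} (hA : IsUpperSet A) {γ : ℝ≥0∞} (hγ : γ ≤ μ univ)
    (h : ∀ s ∉ A, γ ≤ μ {x | s < f x}) : γ ≤ μ (f ⁻¹' A) := by
  rcases Aᶜ.eq_empty_or_nonempty with hAc | ⟨s₀, hs₀⟩
  · rwa [compl_empty_iff.mp hAc, preimage_univ]
  -- gives `Aᶜ` the order topology, so that `atTop` on it is countably generated
  have := hA.compl.ordConnected
  have hanti : Antitone fun s : ↥Aᶜ => f ⁻¹' Ioi (s : β) :=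
    fun _ _ hst => preimage_mono (Ioi_subset_Ioi hst)
  rw [hA.eq_iInter_Ioi_compl, preimage_iInter,
    hanti.measure_iInter (fun _ => (hf measurableSet_Ioi).nullMeasurableSet)
      ⟨⟨s₀, hs₀⟩, measure_ne_top _ _⟩]
  exact le_iInf fun s => h s s.2

theorem surprise_region_measurable_and_ge_general
    {Ω : Type*} [MeasurableSpace Ω] (P : Measure Ω) [IsProbabilityMeasure P]
    (r : Ω → ℝ) (hr : Measurable r)
    (γ : ℝ≥0∞) (hγ : γ ≤ 1) :
    MeasurableSet {ω₀ | P {ω | r ω > r ω₀} ≤ γ} ∧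
      γ ≤ P {ω₀ | P {ω | r ω > r ω₀} ≤ γ} := by
  have hA : IsUpperSet {t : ℝ | P {ω | r ω > t} ≤ γ} :=
    fun _ _ hst hs => (measure_mono fun _ hω => lt_of_le_of_lt hst hω).trans hs
  exact ⟨hr hA.ordConnected.measurableSet,
    le_measure_preimage_of_isUpperSet hr hA (by rwa [measure_univ]) fun _ hs => (not_le.mp hs).le⟩

/-- Lemma 1 (first assertion): for a probability measure `P` and measurable
`r : Ω → [0,∞)`, the region `D_γ = {ω₀ : P(r > r ω₀) ≤ γ}` is measurable and
`P(D_γ) ≥ γ`. -/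
theorem surprise_region_measurable_and_ge
    {Ω : Type*} [MeasurableSpace Ω] (P : Measure Ω) [IsProbabilityMeasure P]
    (r : Ω → ℝ) (hr : Measurable r) (hr0 : ∀ ω, 0 ≤ r ω)
    (γ : ℝ≥0∞) (hγ : γ ≤ 1) :
    MeasurableSet {ω₀ | P {ω | r ω > r ω₀} ≤ γ} ∧
      γ ≤ P {ω₀ | P {ω | r ω > r ω₀} ≤ γ} :=
  surprise_region_measurable_and_ge_general P r hr γ hγ
end

section
/- Let P be a probability measure on a measurable space Ω and let r : Ω → [0,∞) be measurable, and suppose the pushforward measure of r under P (the distribution of r(ω) for ω ∼ P) has no atoms. Then for every γ ∈ [0,1], the set D_γ = {ω₀ ∈ Ω : P({ω : r(ω) > r(ω₀)}) ≤ γ} satisfies P(D_γ) = γ. -/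
/-!
Push `P` forward along `r` to a probability measure `μ` on `ℝ` without atoms. Its tail
`x ↦ μ (Ioi x)` is then continuous and antitone, so `{x | μ (Ioi x) ≤ γ}` is a closed upper set:
empty, all of `ℝ`, or a ray `Ici t`. The first two cases force `γ = 0` and `γ = 1` through the
limits of the tail at `±∞`. In the last, continuity of the tail at `t` gives `μ (Ioi t) = γ`, and
`μ (Ici t) = μ (Ioi t)` because `t` is not an atom.
-/

open MeasureTheory
open scoped ENNReal

open Set Filter Topology Function

theorem IsUpperSet.eq_empty_or_eq_univ_or_eq_Ici {α : Type*} [ConditionallyCompleteLinearOrder α]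
    [TopologicalSpace α] [OrderTopology α] {s : Set α} (hu : IsUpperSet s) (hc : IsClosed s) :
    s = ∅ ∨ s = univ ∨ ∃ t, s = Ici t := by
  rcases s.eq_empty_or_nonempty with hempty | hne
  · exact Or.inl hempty
  by_cases hbdd : BddBelow s
  · exact Or.inr <| Or.inr ⟨sInf s, Subset.antisymm (fun _ hx ↦ csInf_le hbdd hx)
      fun _ hx ↦ hu hx (hc.csInf_mem hne hbdd)⟩
  · refine Or.inr <| Or.inl <| eq_univ_of_forall fun x ↦ ?_
    obtain ⟨y, hy, hyx⟩ := not_bddBelow_iff.1 hbdd x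
    exact hu hyx.le hy

namespace ProbabilityTheory

variable (μ : Measure ℝ) [IsProbabilityMeasure μ]

theorem continuous_cdf [NullSingletonClass μ] : Continuous (cdf μ) := by
  refine continuous_iff_continuousAt.2 fun x ↦ ?_
  rw [(monotone_cdf μ).continuousAt_iff_leftLim_eq_rightLim, StieltjesFunction.rightLim_eq]
  have hjump : ENNReal.ofReal (cdf μ x - leftLim (cdf μ) x) = 0 := by
    rw [← StieltjesFunction.measure_singleton, measure_cdf, measure_singleton]
  have hleft : leftLim (cdf μ) x ≤ cdf μ x := (monotone_cdf μ).leftLim_le le_rfl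
  linarith [ENNReal.ofReal_eq_zero.1 hjump]

theorem measure_Ioi_eq_one_sub_ofReal_cdf (x : ℝ) :
    μ (Ioi x) = 1 - ENNReal.ofReal (cdf μ x) := by
  rw [← compl_Iic, prob_compl_eq_one_sub measurableSet_Iic, ofReal_cdf]

end ProbabilityTheory

namespace MeasureTheory

open ProbabilityTheory

variable (μ : Measure ℝ)

theorem tendsto_measure_Ioi_atTop [IsFiniteMeasure μ] :
    Tendsto (fun x ↦ μ (Ioi x)) atTop (𝓝 0) := by
  have h := tendsto_measure_iInter_atTop (μ := μ) (fun x ↦ measurableSet_Ioi.nullMeasurableSet)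
    antitone_Ioi ⟨0, measure_ne_top μ _⟩
  have hempty : ⋂ x : ℝ, Ioi x = ∅ := iInter_eq_empty_iff.2 fun x ↦ ⟨x, lt_irrefl x⟩
  rwa [hempty, measure_empty] at h

theorem tendsto_measure_Ioi_atBot : Tendsto (fun x ↦ μ (Ioi x)) atBot (𝓝 (μ univ)) := by
  have h := tendsto_measure_iUnion_atBot (μ := μ) (antitone_Ioi (α := ℝ))
  rwa [iUnion_Ioi] at h

variable [IsProbabilityMeasure μ] [NullSingletonClass μ]

theorem continuous_measure_Ioi : Continuous fun x ↦ μ (Ioi x) := by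
  simp_rw [measure_Ioi_eq_one_sub_ofReal_cdf]
  exact (ENNReal.continuous_sub_left ENNReal.one_ne_top).comp
    (ENNReal.continuous_ofReal.comp (continuous_cdf μ))

theorem isClosed_setOf_measure_Ioi_le (γ : ℝ≥0∞) : IsClosed {x | μ (Ioi x) ≤ γ} :=
  isClosed_le (continuous_measure_Ioi μ) continuous_const

theorem measure_setOf_measure_Ioi_le {γ : ℝ≥0∞} (hγ : γ ≤ 1) : μ {x | μ (Ioi x) ≤ γ} = γ := by
  have hupper : IsUpperSet {x | μ (Ioi x) ≤ γ} :=
    fun _ _ hxy hx ↦ (measure_mono (Ioi_subset_Ioi hxy)).trans hx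
  rcases hupper.eq_empty_or_eq_univ_or_eq_Ici (isClosed_setOf_measure_Ioi_le μ γ) with
    hempty | huniv | ⟨t, ht⟩
  · have hlt : ∀ x, γ < μ (Ioi x) := fun x ↦ not_le.1 fun hx ↦ hempty.subset hx
    have hγ0 : γ ≤ 0 :=
      ge_of_tendsto (tendsto_measure_Ioi_atTop μ) (.of_forall fun x ↦ (hlt x).le)
    rw [hempty, measure_empty, nonpos_iff_eq_zero.1 hγ0]
  · have hle : ∀ x, μ (Ioi x) ≤ γ := fun x ↦ huniv.symm.subset (mem_univ x)
    have hγ1 : μ univ ≤ γ := le_of_tendsto (tendsto_measure_Ioi_atBot μ) (.of_forall hle)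
    rw [measure_univ] at hγ1
    rw [huniv, measure_univ, le_antisymm hγ hγ1]
  · have hle : μ (Ioi t) ≤ γ := ht.symm.subset (mem_Ici.2 le_rfl)
    have hge : γ ≤ μ (Ioi t) := by
      refine ge_of_tendsto (x := 𝓝[<] t)
        ((continuous_measure_Ioi μ).continuousAt.mono_left nhdsWithin_le_nhds)
        (eventually_nhdsWithin_of_forall fun x (hx : x < t) ↦ ?_)
      exact (not_le.1 fun h ↦ not_le.2 hx (ht.subset h)).le
    rw [ht, measure_congr Ioi_ae_eq_Ici.symm, le_antisymm hle hge]

end MeasureTheory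

/-- Lemma 1 (equality assertion): if the distribution of `r` under `P` has no
atoms, then the region `D_γ = {ω₀ : P(r > r ω₀) ≤ γ}` has `P(D_γ) = γ`. -/
theorem surprise_region_eq_of_no_atoms
    {Ω : Type*} [MeasurableSpace Ω] (P : Measure Ω) [IsProbabilityMeasure P]
    (r : Ω → ℝ) (hr : Measurable r) (hr0 : ∀ ω, 0 ≤ r ω)
    (hatoms : ∀ c : ℝ, 0 ≤ c → P {ω | r ω = c} = 0)
    (γ : ℝ≥0∞) (hγ : γ ≤ 1) :
    P {ω₀ | P {ω | r ω > r ω₀} ≤ γ} = γ := by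
  have := Measure.isProbabilityMeasure_map (μ := P) hr.aemeasurable
  have : NullSingletonClass (P.map r) := ⟨fun c ↦ by
    rw [Measure.map_apply hr (measurableSet_singleton c)]
    rcases le_or_gt 0 c with hc | hc
    · exact hatoms c hc
    · have hempty : r ⁻¹' {c} = ∅ :=
        eq_empty_of_forall_notMem fun ω hω ↦ (hc.trans_le (hr0 ω)).ne' hω
      rw [hempty, measure_empty]⟩
  have hIoi : ∀ t, P {ω | r ω > t} = P.map r (Ioi t) :=
    fun t ↦ (Measure.map_apply hr measurableSet_Ioi).symm
  simp_rw [hIoi]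
  exact (Measure.map_apply hr (isClosed_setOf_measure_Ioi_le _ γ).measurableSet).symm.trans
    (measure_setOf_measure_Ioi_le _ hγ)
end

section
/- Let ν be a σ-finite measure on a measurable space Ω, let P be a probability measure and Q a finite measure on Ω, both absolutely continuous with respect to ν with densities p and q respectively. Fix k > 0 and let C = {ω : p(ω) ≥ k·q(ω)}. Then for every measurable set D ⊆ Ω with P(D) ≥ P(C), one has Q(D) ≥ Q(C). -/
open MeasureTheory
open scoped ENNReal NNReal

/-!
On `C \ D` we have `k q ≤ p`, and on `D \ C` we have `p < k q`. Since `P C ≤ P D`, cancelling the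
common part `C ∩ D` gives `P (C \ D) ≤ P (D \ C)`, hence
`k Q (C \ D) ≤ P (C \ D) ≤ P (D \ C) ≤ k Q (D \ C)`; adding `k Q (C ∩ D)` gives `k Q C ≤ k Q D`.
-/

namespace MeasureTheory

variable {Ω : Type*} [MeasurableSpace Ω]

theorem withDensity_apply_mono {ν : Measure Ω} {f g : Ω → ℝ≥0∞} {s : Set Ω}
    (hs : MeasurableSet s) (hfg : ∀ ω ∈ s, f ω ≤ g ω) :
    ν.withDensity f s ≤ ν.withDensity g s := by
  rw [withDensity_apply _ hs, withDensity_apply _ hs]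
  exact setLIntegral_mono' hs hfg

theorem measure_diff_le_measure_diff_of_le {μ : Measure Ω} [IsFiniteMeasure μ] {C D : Set Ω}
    (hC : MeasurableSet C) (hD : MeasurableSet D) (h : μ C ≤ μ D) :
    μ (C \ D) ≤ μ (D \ C) := by
  rw [← measure_inter_add_sdiff C hD, ← measure_inter_add_sdiff D hC, Set.inter_comm D C] at h
  exact (ENNReal.add_le_add_iff_left (measure_ne_top μ _)).mp h

theorem measure_le_of_exchange {μ ρ : Measure Ω} [IsFiniteMeasure μ] {C D : Set Ω}
    (hC : MeasurableSet C) (hD : MeasurableSet D)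
    (hCD : ρ (C \ D) ≤ μ (C \ D)) (hDC : μ (D \ C) ≤ ρ (D \ C)) (h : μ C ≤ μ D) :
    ρ C ≤ ρ D :=
  calc ρ C = ρ (C ∩ D) + ρ (C \ D) := (measure_inter_add_sdiff C hD).symm
    _ ≤ ρ (C ∩ D) + μ (D \ C) := by
      gcongr ρ (C ∩ D) + ?_
      exact hCD.trans (measure_diff_le_measure_diff_of_le hC hD h)
    _ ≤ ρ (D ∩ C) + ρ (D \ C) := by rw [Set.inter_comm]; gcongr
    _ = ρ D := measure_inter_add_sdiff D hC

end MeasureTheory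

theorem density_ratio_level_set_minimizes_general
    {Ω : Type*} [MeasurableSpace Ω] (ν : Measure Ω)
    (p q : Ω → ℝ≥0∞) (hp : Measurable p) (hq : Measurable q)
    (P Q : Measure Ω) [IsProbabilityMeasure P]
    (hP : P = ν.withDensity p) (hQ : Q = ν.withDensity q)
    (k : ℝ≥0) (hk : 0 < k) :
    ∀ D : Set Ω, MeasurableSet D →
      P {ω | (k : ℝ≥0∞) * q ω ≤ p ω} ≤ P D →
      Q {ω | (k : ℝ≥0∞) * q ω ≤ p ω} ≤ Q D := by
  intro D hD hPD
  set C : Set Ω := {ω | (k : ℝ≥0∞) * q ω ≤ p ω}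
  have hC : MeasurableSet C := measurableSet_le (hq.const_mul _) hp
  have hkQ : (k : ℝ≥0∞) • Q = ν.withDensity ((k : ℝ≥0∞) • q) := by
    rw [hQ, withDensity_smul' _ _ ENNReal.coe_ne_top]
  have hkQD : ((k : ℝ≥0∞) • Q) C ≤ ((k : ℝ≥0∞) • Q) D := by
    refine measure_le_of_exchange hC hD ?_ ?_ hPD
    · rw [hkQ, hP]
      exact withDensity_apply_mono (hC.diff hD) fun ω hω ↦ hω.1
    · rw [hkQ, hP]
      exact withDensity_apply_mono (hD.diff hC) fun ω hω ↦ (not_le.mp hω.2).le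
  simp only [Measure.smul_apply, smul_eq_mul] at hkQD
  exact (ENNReal.mul_le_mul_iff_right (by exact_mod_cast hk.ne') ENNReal.coe_ne_top).mp hkQD

/-- Neyman–Pearson-type comparison (key step of Theorem 2): the level set
`C = {p ≥ k·q}` of the density ratio minimizes `Q` among all measurable sets
with at least as much `P`-probability. -/
theorem density_ratio_level_set_minimizes
    {Ω : Type*} [MeasurableSpace Ω] (ν : Measure Ω) [SigmaFinite ν]
    (p q : Ω → ℝ≥0∞) (hp : Measurable p) (hq : Measurable q)
    (P Q : Measure Ω) [IsProbabilityMeasure P] [IsFiniteMeasure Q]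
    (hP : P = ν.withDensity p) (hQ : Q = ν.withDensity q)
    (k : ℝ≥0) (hk : 0 < k) :
    ∀ D : Set Ω, MeasurableSet D →
      P {ω | (k : ℝ≥0∞) * q ω ≤ p ω} ≤ P D →
      Q {ω | (k : ℝ≥0∞) * q ω ≤ p ω} ≤ Q D :=
  density_ratio_level_set_minimizes_general ν p q hp hq P Q hP hQ k hk
end

section
/- Let ν be a σ-finite measure on a measurable space Ω, let P be a probability measure and Q a finite measure on Ω, both absolutely continuous with respect to ν with densities p and q respectively, and suppose q(ω) > 0 for all ω. Let r = p/q, fix γ ∈ [0,1], let D_γ = {ω₀ : P({ω : r(ω) > r(ω₀)}) ≤ γ}, and assume k_γ = inf{k ≥ 0 : P(r > k) ≤ γ} > 0. Then (i) D_γ minimizes Q(D) among all measurable D with P(D) ≥ P(D_γ); and (ii) if in addition the distribution of r under P has no atoms, then D_γ minimizes Q(D) among all measurable D with P(D) ≥ γ. -/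
/-!
On `{r ≥ k}` the density `p` is at least `k q`, and on `{r < k}` it is at most `k q`. So if `D`
has `P`-mass at least that of `D₀ = {r ≥ k}`, the part `D \ D₀` it gains carries at least as
much `P`-mass as the part `D₀ \ D` it loses, hence at least as much `Q`-mass after dividing by
`k` (Neyman–Pearson). With `k = k_γ` the region `D_γ` is exactly `{r ≥ k_γ}`, and
`P(r > k_γ) ≤ γ` by right continuity of `k ↦ P(r > k)`; without atoms this gives
`P(D_γ) ≤ γ`, so (ii) follows from (i).
-/

open MeasureTheory
open scoped ENNReal

namespace ENNReal

theorem le_mul_of_div_lt {a b c : ℝ≥0∞} (h : a / b < c) : a ≤ c * b := by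
  rcases eq_or_ne b 0 with rfl | hb₀
  · rcases eq_or_ne a 0 with rfl | ha
    · exact zero_le
    · simp [div_zero ha] at h
  rcases eq_or_ne b ∞ with rfl | hb
  · simp [mul_top (pos_of_gt h).ne']
  · exact ((ENNReal.div_lt_iff (Or.inl hb₀) (Or.inl hb)).1 h).le

theorem le_of_mul_le_mul_left_of_mul_ne_top {k a b : ℝ≥0∞} (hk : k ≠ 0) (ha : k * a ≠ ∞)
    (h : k * a ≤ k * b) : a ≤ b := by
  rcases eq_or_ne a 0 with rfl | ha₀
  · exact zero_le
  · exact (ENNReal.mul_le_mul_iff_right hk (fun hk' => ha (hk' ▸ top_mul ha₀))).1 h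

end ENNReal

namespace MeasureTheory

variable {Ω : Type*} [MeasurableSpace Ω] {μ : Measure Ω} {s t : Set Ω}

theorem measure_le_of_measure_sdiff_le (hs : MeasurableSet s) (h : μ (s \ t) ≤ μ (t \ s)) :
    μ s ≤ μ t :=
  calc μ s ≤ μ (s ∩ t) + μ (s \ t) := measure_le_inter_add_sdiff μ s t
    _ ≤ μ (t ∩ s) + μ (t \ s) := by rw [Set.inter_comm]; gcongr
    _ = μ t := measure_inter_add_sdiff t hs

theorem measure_sdiff_le_of_measure_le [IsFiniteMeasure μ] (ht : MeasurableSet t)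
    (h : μ s ≤ μ t) : μ (s \ t) ≤ μ (t \ s) := by
  have : μ (s ∩ t) + μ (s \ t) ≤ μ (s ∩ t) + μ (t \ s) :=
    calc μ (s ∩ t) + μ (s \ t) = μ s := measure_inter_add_sdiff s ht
      _ ≤ μ t := h
      _ ≤ μ (t ∩ s) + μ (t \ s) := measure_le_inter_add_sdiff μ t s
      _ = μ (s ∩ t) + μ (t \ s) := by rw [Set.inter_comm]
  exact (ENNReal.add_le_add_iff_left (measure_ne_top μ _)).1 this

section NeymanPearson

variable {ν : Measure Ω} {p q : Ω → ℝ≥0∞} {k : ℝ≥0∞} {A : Set Ω}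

theorem const_mul_withDensity_le_of_le_div (hA : MeasurableSet A)
    (h : ∀ ω ∈ A, k ≤ p ω / q ω) : k * ν.withDensity q A ≤ ν.withDensity p A := by
  rw [withDensity_apply _ hA, withDensity_apply _ hA]
  exact (lintegral_const_mul_le k q).trans <|
    setLIntegral_mono' hA fun ω hω => ENNReal.mul_le_of_le_div (h ω hω)

theorem withDensity_le_const_mul_of_div_lt (hq : Measurable q) (hA : MeasurableSet A)
    (h : ∀ ω ∈ A, p ω / q ω < k) : ν.withDensity p A ≤ k * ν.withDensity q A := by
  rw [withDensity_apply _ hA, withDensity_apply _ hA, ← lintegral_const_mul k hq]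
  exact setLIntegral_mono' hA fun ω hω => ENNReal.le_mul_of_div_lt (h ω hω)

theorem withDensity_setOf_le_div_le [IsFiniteMeasure (ν.withDensity p)] (hp : Measurable p)
    (hq : Measurable q) (hk : k ≠ 0) {D : Set Ω} (hD : MeasurableSet D)
    (h : ν.withDensity p {ω | k ≤ p ω / q ω} ≤ ν.withDensity p D) :
    ν.withDensity q {ω | k ≤ p ω / q ω} ≤ ν.withDensity q D := by
  set D₀ := {ω | k ≤ p ω / q ω}
  have hD₀ : MeasurableSet D₀ := measurableSet_le measurable_const (hp.div hq)
  have hP : ν.withDensity p (D₀ \ D) ≤ ν.withDensity p (D \ D₀) :=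
    measure_sdiff_le_of_measure_le hD h
  have hlost : k * ν.withDensity q (D₀ \ D) ≤ ν.withDensity p (D₀ \ D) :=
    const_mul_withDensity_le_of_le_div (hD₀.diff hD) fun ω hω => hω.1
  have hgained : ν.withDensity p (D \ D₀) ≤ k * ν.withDensity q (D \ D₀) :=
    withDensity_le_const_mul_of_div_lt hq (hD.diff hD₀) fun ω hω => not_le.1 hω.2
  refine measure_le_of_measure_sdiff_le hD₀ ?_
  exact ENNReal.le_of_mul_le_mul_left_of_mul_ne_top hk
    (ne_top_of_le_ne_top (measure_ne_top _ _) hlost) (hlost.trans (hP.trans hgained))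

end NeymanPearson

section CriticalValue

variable (P : Measure Ω) (r : Ω → ℝ≥0∞) (γ : ℝ≥0∞)

noncomputable def criticalValue : ℝ≥0∞ := sInf {k | P {ω | r ω > k} ≤ γ}

theorem measure_gt_criticalValue_le : P {ω | r ω > criticalValue P r γ} ≤ γ := by
  obtain ⟨u, hu_anti, hu_tendsto, hu_mem⟩ :=
    exists_seq_tendsto_sInf (S := {k | P {ω | r ω > k} ≤ γ}) ⟨∞, by simp⟩
      (OrderBot.bddBelow _)
  have hunion : {ω | r ω > criticalValue P r γ} = ⋃ n, {ω | r ω > u n} := by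
    ext ω
    simp only [Set.mem_ofPred_eq, Set.mem_iUnion]
    exact ⟨fun h => (hu_tendsto.eventually_lt_const h).exists,
      fun ⟨n, hn⟩ => (sInf_le (hu_mem n)).trans_lt hn⟩
  have hmono : Monotone fun n => {ω | r ω > u n} :=
    fun m n hmn ω hω => (hu_anti hmn).trans_lt hω
  rw [hunion, hmono.measure_iUnion]
  exact iSup_le hu_mem

theorem setOf_measure_gt_le_eq :
    {ω₀ | P {ω | r ω > r ω₀} ≤ γ} = {ω | criticalValue P r γ ≤ r ω} := by
  ext ω₀
  simp only [Set.mem_ofPred_eq]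
  refine ⟨fun h => sInf_le h, fun h => ?_⟩
  exact (measure_mono fun ω hω => h.trans_lt hω).trans (measure_gt_criticalValue_le P r γ)

theorem measure_ge_criticalValue_le (h : P {ω | r ω = criticalValue P r γ} = 0) :
    P {ω | criticalValue P r γ ≤ r ω} ≤ γ := by
  have hsplit : {ω | criticalValue P r γ ≤ r ω} ⊆
      {ω | r ω > criticalValue P r γ} ∪ {ω | r ω = criticalValue P r γ} :=
    fun ω (hω : _ ≤ r ω) => (lt_or_eq_of_le hω).imp id Eq.symm
  calc P {ω | criticalValue P r γ ≤ r ω}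
      ≤ P {ω | r ω > criticalValue P r γ} + P {ω | r ω = criticalValue P r γ} :=
        (measure_mono hsplit).trans (measure_union_le _ _)
    _ ≤ γ := by rw [h, add_zero]; exact measure_gt_criticalValue_le P r γ

end CriticalValue

end MeasureTheory

theorem surprise_region_minimizes_Q_general
    {Ω : Type*} [MeasurableSpace Ω] (ν : Measure Ω)
    (p q : Ω → ℝ≥0∞) (hp : Measurable p) (hq : Measurable q)
    (P Q : Measure Ω) [IsProbabilityMeasure P]
    (hP : P = ν.withDensity p) (hQ : Q = ν.withDensity q)
    (r : Ω → ℝ≥0∞) (hr : r = fun ω => p ω / q ω)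
    (γ : ℝ≥0∞)
    (hk : 0 < sInf {k : ℝ≥0∞ | P {ω | r ω > k} ≤ γ}) :
    (∀ D : Set Ω, MeasurableSet D →
        P {ω₀ | P {ω | r ω > r ω₀} ≤ γ} ≤ P D →
        Q {ω₀ | P {ω | r ω > r ω₀} ≤ γ} ≤ Q D) ∧
    ((∀ c : ℝ≥0∞, P {ω | r ω = c} = 0) →
      ∀ D : Set Ω, MeasurableSet D → γ ≤ P D →
        Q {ω₀ | P {ω | r ω > r ω₀} ≤ γ} ≤ Q D) := by
  rw [setOf_measure_gt_le_eq]
  have minimizes : ∀ D, MeasurableSet D → P {ω | criticalValue P r γ ≤ r ω} ≤ P D →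
      Q {ω | criticalValue P r γ ≤ r ω} ≤ Q D := by
    subst hP hQ hr
    exact fun D hD => withDensity_setOf_le_div_le hp hq hk.ne' hD
  exact ⟨minimizes, fun hnoAtoms D hD hγD =>
    minimizes D hD ((measure_ge_criticalValue_le P r γ (hnoAtoms _)).trans hγD)⟩

/-- Theorem 2: with `r = p/q`, `D_γ = {ω₀ : P(r > r ω₀) ≤ γ}` and
`k_γ = inf {k : P(r > k) ≤ γ} > 0`, (i) `D_γ` minimizes `Q(D)` among
measurable `D` with `P(D) ≥ P(D_γ)`, and (ii) if the distribution of `r`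
under `P` has no atoms, `D_γ` minimizes `Q(D)` among measurable `D` with
`P(D) ≥ γ`. -/
theorem surprise_region_minimizes_Q
    {Ω : Type*} [MeasurableSpace Ω] (ν : Measure Ω) [SigmaFinite ν]
    (p q : Ω → ℝ≥0∞) (hp : Measurable p) (hq : Measurable q)
    (hqpos : ∀ ω, 0 < q ω)
    (P Q : Measure Ω) [IsProbabilityMeasure P] [IsFiniteMeasure Q]
    (hP : P = ν.withDensity p) (hQ : Q = ν.withDensity q)
    (r : Ω → ℝ≥0∞) (hr : r = fun ω => p ω / q ω)
    (γ : ℝ≥0∞) (hγ : γ ≤ 1)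
    (hk : 0 < sInf {k : ℝ≥0∞ | P {ω | r ω > k} ≤ γ}) :
    (∀ D : Set Ω, MeasurableSet D →
        P {ω₀ | P {ω | r ω > r ω₀} ≤ γ} ≤ P D →
        Q {ω₀ | P {ω | r ω > r ω₀} ≤ γ} ≤ Q D) ∧
    ((∀ c : ℝ≥0∞, P {ω | r ω = c} = 0) →
      ∀ D : Set Ω, MeasurableSet D → γ ≤ P D →
        Q {ω₀ | P {ω | r ω > r ω₀} ≤ γ} ≤ Q D) :=
  surprise_region_minimizes_Q_general ν p q hp hq P Q hP hQ r hr γ hk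
end

section
/- Let ν be a σ-finite measure on a measurable space Ω, let P be a probability measure and Q a finite measure on Ω, both absolutely continuous with respect to ν with densities p and q respectively, and suppose q(ω) > 0 for all ω. Let r = p/q, fix γ ∈ [0,1], let D_γ = {ω₀ : P({ω : r(ω) > r(ω₀)}) ≤ γ}, and assume k_γ = inf{k ≥ 0 : P(r > k) ≤ γ} > 0. Then the complement D_γᶜ maximizes Q(R) among all measurable R ⊆ Ω with P(R) ≤ P(D_γᶜ). -/
/-!
This is the Neyman–Pearson lemma. The level set `S = {k | P(r > k) ≤ γ}` is an upper set and
`D_γ = r⁻¹' S`, so with `k_γ = inf S` we have `k_γ q ≤ p` on `D_γ` and `p ≤ k_γ q` off `D_γ`.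
For `R` with `P R ≤ P D_γᶜ` this gives
`k_γ Q(R ∩ D_γ) ≤ P(R ∩ D_γ) ≤ P(D_γᶜ \ R) ≤ k_γ Q(D_γᶜ \ R)`, and cancelling `k_γ > 0`
(when `k_γ = ∞`, finiteness of `P` forces `Q(R ∩ D_γ) = 0`) gives `Q R ≤ Q D_γᶜ`.
-/

open MeasureTheory
open scoped ENNReal NNReal

theorem ENNReal.le_of_mul_le_mul_left_of_mul_ne_top_s5 {a b c : ℝ≥0∞} (h : a * b ≤ a * c)
    (ha : a ≠ 0) (hab : a * b ≠ ∞) : b ≤ c := by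
  rcases eq_or_ne a ∞ with rfl | ha_top
  · have hb : b = 0 := by
      by_contra hb
      exact hab (ENNReal.top_mul hb)
    simp [hb]
  · exact (ENNReal.mul_le_mul_iff_right ha ha_top).mp h

section SetDifference

variable {Ω : Type*} [MeasurableSpace Ω] {μ : Measure Ω} {R S : Set Ω}

theorem measure_sdiff_le_sdiff_of_le (hR : MeasurableSet R) (hS : MeasurableSet S)
    (hRS : μ (R ∩ S) ≠ ∞) (h : μ R ≤ μ S) : μ (R \ S) ≤ μ (S \ R) := by
  rw [← measure_sdiff_add_inter R hS, ← measure_sdiff_add_inter S hR, Set.inter_comm S R] at h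
  exact (ENNReal.add_le_add_iff_right hRS).mp h

theorem measure_le_of_sdiff_le_sdiff (hR : MeasurableSet R) (hS : MeasurableSet S)
    (h : μ (R \ S) ≤ μ (S \ R)) : μ R ≤ μ S := by
  rw [← measure_sdiff_add_inter R hS, ← measure_sdiff_add_inter S hR, Set.inter_comm S R]
  gcongr

end SetDifference

theorem neyman_pearson_withDensity {Ω : Type*} [MeasurableSpace Ω] {ν : Measure Ω}
    {p q : Ω → ℝ≥0∞} (hq : Measurable q) [IsFiniteMeasure (ν.withDensity p)]
    {k : ℝ≥0∞} (hk : k ≠ 0) {D R : Set Ω} (hD : MeasurableSet D) (hR : MeasurableSet R)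
    (hD_ge : ∀ ω ∈ D, k * q ω ≤ p ω) (hD_le : ∀ ω ∉ D, p ω ≤ k * q ω)
    (hPR : ν.withDensity p R ≤ ν.withDensity p Dᶜ) :
    ν.withDensity q R ≤ ν.withDensity q Dᶜ := by
  set P := ν.withDensity p
  set Q := ν.withDensity q
  have hkQ_le_P : k * Q (R ∩ D) ≤ P (R ∩ D) := by
    rw [withDensity_apply _ (hR.inter hD), withDensity_apply _ (hR.inter hD),
      ← lintegral_const_mul k hq]
    exact setLIntegral_mono' (hR.inter hD) fun ω hω => hD_ge ω hω.2
  have hP_le_kQ : P (Dᶜ \ R) ≤ k * Q (Dᶜ \ R) := by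
    rw [withDensity_apply _ (hD.compl.diff hR), withDensity_apply _ (hD.compl.diff hR),
      ← lintegral_const_mul k hq]
    exact setLIntegral_mono' (hD.compl.diff hR) fun ω hω => hD_le ω hω.1
  have hP_sdiff : P (R ∩ D) ≤ P (Dᶜ \ R) := by
    simpa only [Set.sdiff_compl] using
      measure_sdiff_le_sdiff_of_le hR hD.compl (measure_ne_top P _) hPR
  have hQ_sdiff : Q (R ∩ D) ≤ Q (Dᶜ \ R) :=
    ENNReal.le_of_mul_le_mul_left_of_mul_ne_top_s5 (hkQ_le_P.trans (hP_sdiff.trans hP_le_kQ)) hk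
      (ne_top_of_le_ne_top (measure_ne_top P _) hkQ_le_P)
  exact measure_le_of_sdiff_le_sdiff hR hD.compl (by rwa [Set.sdiff_compl])

theorem isUpperSet_setOf_measure_lt_le {Ω : Type*} [MeasurableSpace Ω] (P : Measure Ω)
    (r : Ω → ℝ≥0∞) (γ : ℝ≥0∞) : IsUpperSet {k | P {ω | k < r ω} ≤ γ} :=
  fun _ _ hab ha => (measure_mono fun _ hω => hab.trans_lt hω).trans ha

theorem le_sInf_of_notMem_of_isUpperSet {α : Type*} [CompleteLinearOrder α] {S : Set α}
    (hS : IsUpperSet S) {x : α} (hx : x ∉ S) : x ≤ sInf S :=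
  le_sInf fun _ hs => le_of_not_gt fun hlt => hx (hS hlt.le hs)

theorem surprise_region_complement_maximizes_Q_general
    {Ω : Type*} [MeasurableSpace Ω] (ν : Measure Ω)
    (p q : Ω → ℝ≥0∞) (hp : Measurable p) (hq : Measurable q)
    (hqpos : ∀ ω, 0 < q ω)
    (P Q : Measure Ω) [IsProbabilityMeasure P]
    (hP : P = ν.withDensity p) (hQ : Q = ν.withDensity q)
    (r : Ω → ℝ≥0∞) (hr : r = fun ω => p ω / q ω)
    (γ : ℝ≥0∞)
    (hk : 0 < sInf {k : ℝ≥0∞ | P {ω | r ω > k} ≤ γ}) :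
    ∀ R : Set Ω, MeasurableSet R →
      P R ≤ P ({ω₀ | P {ω | r ω > r ω₀} ≤ γ}ᶜ) →
      Q R ≤ Q ({ω₀ | P {ω | r ω > r ω₀} ≤ γ}ᶜ) := by
  intro R hR hPR
  subst hP hQ hr
  have hS := isUpperSet_setOf_measure_lt_le (ν.withDensity p) (fun ω => p ω / q ω) γ
  refine neyman_pearson_withDensity hq hk.ne'
    ((hp.div hq) hS.ordConnected.measurableSet) hR (fun ω hω => ?_) (fun ω hω => ?_) hPR
  · exact ENNReal.mul_le_of_le_div (sInf_le hω)
  · exact (ENNReal.div_le_iff_le_mul (Or.inl (hqpos ω).ne') (Or.inr hk.ne')).mp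
      (le_sInf_of_notMem_of_isUpperSet hS hω)

/-- Rejection-region optimality (end of Section 2): the complement of the
surprise region `D_γ` maximizes `Q(R)` among all measurable `R` with
`P(R) ≤ P(D_γᶜ)`. -/
theorem surprise_region_complement_maximizes_Q
    {Ω : Type*} [MeasurableSpace Ω] (ν : Measure Ω) [SigmaFinite ν]
    (p q : Ω → ℝ≥0∞) (hp : Measurable p) (hq : Measurable q)
    (hqpos : ∀ ω, 0 < q ω)
    (P Q : Measure Ω) [IsProbabilityMeasure P] [IsFiniteMeasure Q]
    (hP : P = ν.withDensity p) (hQ : Q = ν.withDensity q)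
    (r : Ω → ℝ≥0∞) (hr : r = fun ω => p ω / q ω)
    (γ : ℝ≥0∞) (hγ : γ ≤ 1)
    (hk : 0 < sInf {k : ℝ≥0∞ | P {ω | r ω > k} ≤ γ}) :
    ∀ R : Set Ω, MeasurableSet R →
      P R ≤ P ({ω₀ | P {ω | r ω > r ω₀} ≤ γ}ᶜ) →
      Q R ≤ Q ({ω₀ | P {ω | r ω > r ω₀} ≤ γ}ᶜ) :=
  surprise_region_complement_maximizes_Q_general ν p q hp hq hqpos P Q hP hQ r hr γ hk
end

section
/- Let ν be a σ-finite measure on a measurable space Ω, let P and Q be probability measures on Ω absolutely continuous with respect to ν with densities p and q respectively. Let k > 0 and let C = {ω : p(ω) > k·q(ω)}; assume ν(C) > 0 and Q(C) < 1. Then (i) P(C)·(1 − Q(C)) > Q(C)·(1 − P(C)) (the Bayes factor in favor of C exceeds 1), and (ii) P(C) > Q(C) (the relative belief ratio of C exceeds 1). -/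
open MeasureTheory
open scoped ENNReal NNReal

/-
On `C = {p > k q}` the posterior density dominates `k` times the prior density strictly, and off `C`
it is dominated by it, so `k Q(C) < P(C)` and `P(Cᶜ) ≤ k Q(Cᶜ)`. Chaining the two bounds gives
`Q(C) P(Cᶜ) ≤ k Q(C) Q(Cᶜ) < P(C) Q(Cᶜ)`, which is the Bayes factor inequality, and it forces
`Q(C) < P(C)`, since otherwise both factors on the left would dominate those on the right.
-/

section Density

variable {Ω : Type*} [MeasurableSpace Ω] {ν : Measure Ω} {p q : Ω → ℝ≥0∞} {k : ℝ≥0∞} {C : Set Ω}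

lemma const_mul_withDensity_lt_withDensity (hC : MeasurableSet C) (hνC : ν C ≠ 0)
    (hp : Measurable p) (hk : k ≠ ∞) (hqC : ν.withDensity q C ≠ ∞)
    (hlt : ∀ ω ∈ C, k * q ω < p ω) :
    k * ν.withDensity q C < ν.withDensity p C := by
  rw [withDensity_apply _ hC, withDensity_apply _ hC, ← lintegral_const_mul' _ _ hk]
  refine setLIntegral_strict_mono hC hνC hp ?_ (ae_of_all _ hlt)
  rw [lintegral_const_mul' _ _ hk, ← withDensity_apply _ hC]
  exact ENNReal.mul_ne_top hk hqC

lemma withDensity_le_const_mul_withDensity (hC : MeasurableSet C) (hk : k ≠ ∞)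
    (hle : ∀ ω ∈ C, p ω ≤ k * q ω) :
    ν.withDensity p C ≤ k * ν.withDensity q C := by
  rw [withDensity_apply _ hC, withDensity_apply _ hC, ← lintegral_const_mul' _ _ hk]
  exact setLIntegral_mono' hC hle

end Density

namespace ENNReal

lemma mul_tsub_lt_mul_tsub_of_bounds {a b k : ℝ≥0∞} (hb : b < 1) (hlt : k * b < a)
    (hle : 1 - a ≤ k * (1 - b)) :
    b * (1 - a) < a * (1 - b) := by
  have hb' : 1 - b ≠ 0 := (tsub_pos_of_lt hb).ne'
  have hb'' : 1 - b ≠ ∞ := ne_top_of_le_ne_top one_ne_top tsub_le_self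
  calc b * (1 - a) ≤ b * (k * (1 - b)) := mul_le_mul_right hle b
    _ = (1 - b) * (k * b) := by ring
    _ < (1 - b) * a := ENNReal.mul_lt_mul_right hb' hb'' hlt
    _ = a * (1 - b) := mul_comm _ _

lemma lt_of_mul_tsub_lt_mul_tsub {a b c : ℝ≥0∞} (h : b * (c - a) < a * (c - b)) : b < a := by
  by_contra! hab
  exact h.not_ge (mul_le_mul' hab (tsub_le_tsub_left hab c))

end ENNReal

theorem bayes_factor_and_relative_belief_gt_one_general
    {Ω : Type*} [MeasurableSpace Ω] (ν : Measure Ω)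
    (p q : Ω → ℝ≥0∞) (hp : Measurable p) (hq : Measurable q)
    (P Q : Measure Ω) [IsProbabilityMeasure P] [IsProbabilityMeasure Q]
    (hP : P = ν.withDensity p) (hQ : Q = ν.withDensity q)
    (k : ℝ≥0)
    (C : Set Ω) (hC : C = {ω | (k : ℝ≥0∞) * q ω < p ω})
    (hνC : 0 < ν C) (hQC : Q C < 1) :
    Q C * (1 - P C) < P C * (1 - Q C) ∧ Q C < P C := by
  have hCm : MeasurableSet C := hC ▸ measurableSet_lt (hq.const_mul _) hp
  have hin : k * Q C < P C := by
    subst hP hQ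
    exact const_mul_withDensity_lt_withDensity hCm hνC.ne' hp ENNReal.coe_ne_top
      (measure_ne_top _ _) fun ω hω ↦ by rwa [hC] at hω
  have hout : P Cᶜ ≤ k * Q Cᶜ := by
    subst hP hQ
    exact withDensity_le_const_mul_withDensity hCm.compl ENNReal.coe_ne_top
      fun ω hω ↦ not_lt.mp (by rwa [hC] at hω)
  rw [prob_compl_eq_one_sub hCm, prob_compl_eq_one_sub hCm] at hout
  have hbf := ENNReal.mul_tsub_lt_mul_tsub_of_bounds hQC hin hout
  exact ⟨hbf, ENNReal.lt_of_mul_tsub_lt_mul_tsub hbf⟩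

/-- Lemma 6: for the density-ratio level set `C = {p > k·q}` with `k > 0`,
`ν(C) > 0` and `Q(C) < 1`, the Bayes factor in favor of `C` exceeds 1,
i.e. `P(C)(1 − Q(C)) > Q(C)(1 − P(C))`, and the relative belief ratio exceeds
1, i.e. `P(C) > Q(C)`. -/
theorem bayes_factor_and_relative_belief_gt_one
    {Ω : Type*} [MeasurableSpace Ω] (ν : Measure Ω) [SigmaFinite ν]
    (p q : Ω → ℝ≥0∞) (hp : Measurable p) (hq : Measurable q)
    (P Q : Measure Ω) [IsProbabilityMeasure P] [IsProbabilityMeasure Q]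
    (hP : P = ν.withDensity p) (hQ : Q = ν.withDensity q)
    (k : ℝ≥0) (hk : 0 < k)
    (C : Set Ω) (hC : C = {ω | (k : ℝ≥0∞) * q ω < p ω})
    (hνC : 0 < ν C) (hQC : Q C < 1) :
    Q C * (1 - P C) < P C * (1 - Q C) ∧ Q C < P C :=
  bayes_factor_and_relative_belief_gt_one_general ν p q hp hq P Q hP hQ k C hC hνC hQC
end

section
/- Let ν be a σ-finite measure on a measurable space Ω, let P and Q be probability measures on Ω absolutely continuous with respect to ν with densities p and q respectively, with q(ω) > 0 for all ω. Fix γ ∈ [0,1], let D_γ = {ω₀ : P({ω : p(ω)/q(ω) > p(ω₀)/q(ω₀)}) ≤ γ}, and assume k_γ = inf{k ≥ 0 : P(p/q > k) ≤ γ} > 0. Then for every measurable C ⊆ Ω with P(C) = P(D_γ): (i) Q(D_γ) ≤ Q(C); (ii) if Q(D_γ) > 0 then P(D_γ)/Q(D_γ) ≥ P(C)/Q(C) (the relative belief ratio is maximal at D_γ); and (iii) if 0 < Q(D_γ), Q(C) < 1 and P(D_γ) < 1 then [P(D_γ)/(1−P(D_γ))]/[Q(D_γ)/(1−Q(D_γ))]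 ≥ [P(C)/(1−P(C))]/[Q(C)/(1−Q(C))] (the Bayes factor is maximal at D_γ). -/
/-!
`D_γ` is the superlevel set `{k_γ ≤ p / q}` of the likelihood ratio: the infimum defining `k_γ` is
attained because `k ↦ P(p / q > k)` is right-continuous. On `D_γ \ C` we have `p ≥ k_γ q`, on
`C \ D_γ` we have `p ≤ k_γ q`, and the two pieces carry equal posterior mass; hence
`k_γ Q(D_γ \ C) ≤ k_γ Q(C \ D_γ)`, i.e. `Q(D_γ) ≤ Q(C)` (the Neyman–Pearson argument). The
statements about the relative belief ratio and the Bayes factor follow by monotonicity.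
-/

open MeasureTheory
open scoped ENNReal

namespace ENNReal

theorem le_of_mul_le_of_le_mul {a b k x : ℝ≥0∞} (hk : k ≠ 0) (hx : x ≠ ∞)
    (ha : k * a ≤ x) (hb : x ≤ k * b) : a ≤ b := by
  rcases eq_or_ne k ∞ with rfl | hk_top
  · have : a = 0 := by
      by_contra h
      exact hx (top_le_iff.1 (ENNReal.top_mul h ▸ ha))
    simp only [this, zero_le]
  · exact (ENNReal.mul_le_mul_iff_right hk hk_top).1 (ha.trans hb)

end ENNReal

namespace MeasureTheory

variable {Ω : Type*} [MeasurableSpace Ω]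

section Threshold

variable (μ : Measure Ω) (f : Ω → ℝ≥0∞) (γ : ℝ≥0∞)

/-- The paper's `k_γ`. -/
noncomputable def tailThreshold : ℝ≥0∞ :=
  sInf {k | μ {ω | k < f ω} ≤ γ}

theorem measure_tailThreshold_lt_le : μ {ω | tailThreshold μ f γ < f ω} ≤ γ := by
  have hne : {k | μ {ω | k < f ω} ≤ γ}.Nonempty := ⟨∞, by simp⟩
  obtain ⟨u, hu_anti, hu_tendsto, hu_mem⟩ := exists_seq_tendsto_sInf hne (OrderBot.bddBelow _)
  have hsub : {ω | tailThreshold μ f γ < f ω} ⊆ ⋃ n, {ω | u n < f ω} := fun ω hω =>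
    Set.mem_iUnion.2 (hu_tendsto.eventually_lt_const hω).exists
  have hmono : Monotone fun n => {ω | u n < f ω} := fun _ _ hmn _ hω =>
    (hu_anti hmn).trans_lt hω
  calc μ {ω | tailThreshold μ f γ < f ω} ≤ μ (⋃ n, {ω | u n < f ω}) := measure_mono hsub
    _ = ⨆ n, μ {ω | u n < f ω} := hmono.measure_iUnion
    _ ≤ γ := iSup_le hu_mem

theorem setOf_measure_lt_le_eq :
    {ω₀ | μ {ω | f ω₀ < f ω} ≤ γ} = {ω | tailThreshold μ f γ ≤ f ω} := by
  ext ω₀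
  refine ⟨fun h => show tailThreshold μ f γ ≤ f ω₀ from sInf_le h, fun h => ?_⟩
  calc μ {ω | f ω₀ < f ω} ≤ μ {ω | tailThreshold μ f γ < f ω} :=
        measure_mono fun ω hω => show tailThreshold μ f γ < f ω from h.trans_lt hω
    _ ≤ γ := measure_tailThreshold_lt_le μ f γ

end Threshold

section NeymanPearson

variable {ν : Measure Ω} {p q : Ω → ℝ≥0∞} {k : ℝ≥0∞}

theorem const_mul_withDensity_apply_le {A : Set Ω} (hp : Measurable p) (hA : MeasurableSet A)
    (h : ∀ ω ∈ A, k * q ω ≤ p ω) : k * ν.withDensity q A ≤ ν.withDensity p A := by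
  rw [withDensity_apply _ hA, withDensity_apply _ hA]
  exact (lintegral_const_mul_le k q).trans (setLIntegral_mono hp h)

theorem withDensity_apply_le_const_mul {B : Set Ω} (hq : Measurable q) (hB : MeasurableSet B)
    (h : ∀ ω ∈ B, p ω ≤ k * q ω) : ν.withDensity p B ≤ k * ν.withDensity q B := by
  rw [withDensity_apply _ hB, withDensity_apply _ hB, ← lintegral_const_mul k hq]
  exact setLIntegral_mono (hq.const_mul k) h

theorem measure_sdiff_eq_of_measure_eq {μ : Measure Ω} {C D : Set Ω} (hC : MeasurableSet C)
    (hD : MeasurableSet D) (hfin : μ D ≠ ∞) (h : μ C = μ D) : μ (D \ C) = μ (C \ D) := by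
  have hD' := measure_inter_add_sdiff (μ := μ) D hC
  have hC' := measure_inter_add_sdiff (μ := μ) C hD
  rw [Set.inter_comm, h, ← hD'] at hC'
  exact (ENNReal.add_right_inj (measure_ne_top_of_subset Set.inter_subset_left hfin)).1 hC'.symm

theorem measure_le_of_measure_sdiff_le_s11 {μ : Measure Ω} {C D : Set Ω} (hC : MeasurableSet C)
    (hD : MeasurableSet D) (h : μ (D \ C) ≤ μ (C \ D)) : μ D ≤ μ C := by
  rw [← measure_inter_add_sdiff D hC, ← measure_inter_add_sdiff C hD, Set.inter_comm]
  gcongr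

theorem withDensity_apply_le_of_likelihood_threshold (hp : Measurable p) (hq : Measurable q)
    (hk : k ≠ 0) {C D : Set Ω} (hC : MeasurableSet C) (hD : MeasurableSet D)
    (hfin : ν.withDensity p D ≠ ∞) (hin : ∀ ω ∈ D, k * q ω ≤ p ω)
    (hout : ∀ ω ∉ D, p ω ≤ k * q ω) (hPC : ν.withDensity p C = ν.withDensity p D) :
    ν.withDensity q D ≤ ν.withDensity q C := by
  apply measure_le_of_measure_sdiff_le_s11 hC hD
  refine ENNReal.le_of_mul_le_of_le_mul hk
    (measure_ne_top_of_subset (Set.sdiff_subset (t := C)) hfin) ?_ ?_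
  · exact const_mul_withDensity_apply_le hp (hD.diff hC) fun ω hω => hin ω hω.1
  · rw [measure_sdiff_eq_of_measure_eq hC hD hfin hPC]
    exact withDensity_apply_le_const_mul hq (hC.diff hD) fun ω hω => hout ω hω.2

end NeymanPearson

end MeasureTheory

theorem surprise_region_maximizes_BF_and_RB_general
    {Ω : Type*} [MeasurableSpace Ω] (ν : Measure Ω)
    (p q : Ω → ℝ≥0∞) (hp : Measurable p) (hq : Measurable q)
    (P Q : Measure Ω) [IsProbabilityMeasure P] [IsProbabilityMeasure Q]
    (hP : P = ν.withDensity p) (hQ : Q = ν.withDensity q)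
    (r : Ω → ℝ≥0∞) (hr : r = fun ω => p ω / q ω)
    (γ : ℝ≥0∞)
    (D : Set Ω) (hD : D = {ω₀ | P {ω | r ω > r ω₀} ≤ γ})
    (hk : 0 < sInf {k : ℝ≥0∞ | P {ω | r ω > k} ≤ γ}) :
    ∀ C : Set Ω, MeasurableSet C → P C = P D →
      (Q D ≤ Q C) ∧
      (0 < Q D → P C / Q C ≤ P D / Q D) ∧
      (0 < Q D → 0 < Q C → Q D < 1 → Q C < 1 → P D < 1 →
        (P C / (1 - P C)) / (Q C / (1 - Q C)) ≤
          (P D / (1 - P D)) / (Q D / (1 - Q D))) := by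
  intro C hC hPC
  rw [setOf_measure_lt_le_eq] at hD
  have hDm : MeasurableSet D := hD ▸ measurableSet_le measurable_const (hr ▸ hp.div hq)
  have hQDC : Q D ≤ Q C := by
    subst hP hQ hr hD
    exact withDensity_apply_le_of_likelihood_threshold hp hq hk.ne' hC hDm (measure_ne_top _ _)
      (fun ω hω => ENNReal.mul_le_of_le_div hω)
      (fun ω hω => ENNReal.le_mul_of_div_lt (not_le.1 hω)) hPC
  refine ⟨hQDC, fun _ => ?_, fun _ _ _ _ _ => ?_⟩ <;> rw [hPC]
  · exact ENNReal.div_le_div le_rfl hQDC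
  · exact ENNReal.div_le_div le_rfl (ENNReal.div_le_div hQDC (tsub_le_tsub le_rfl hQDC))

/-- Theorem 7: the relative surprise region `D_γ` has minimal prior content,
maximal relative belief ratio and maximal Bayes factor among all measurable
sets with the same posterior content. -/
theorem surprise_region_maximizes_BF_and_RB
    {Ω : Type*} [MeasurableSpace Ω] (ν : Measure Ω) [SigmaFinite ν]
    (p q : Ω → ℝ≥0∞) (hp : Measurable p) (hq : Measurable q)
    (hqpos : ∀ ω, 0 < q ω)
    (P Q : Measure Ω) [IsProbabilityMeasure P] [IsProbabilityMeasure Q]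
    (hP : P = ν.withDensity p) (hQ : Q = ν.withDensity q)
    (r : Ω → ℝ≥0∞) (hr : r = fun ω => p ω / q ω)
    (γ : ℝ≥0∞) (hγ : γ ≤ 1)
    (D : Set Ω) (hD : D = {ω₀ | P {ω | r ω > r ω₀} ≤ γ})
    (hk : 0 < sInf {k : ℝ≥0∞ | P {ω | r ω > k} ≤ γ}) :
    ∀ C : Set Ω, MeasurableSet C → P C = P D →
      (Q D ≤ Q C) ∧
      (0 < Q D → P C / Q C ≤ P D / Q D) ∧
      (0 < Q D → 0 < Q C → Q D < 1 → Q C < 1 → P D < 1 →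
        (P C / (1 - P C)) / (Q C / (1 - Q C)) ≤
          (P D / (1 - P D)) / (Q D / (1 - Q D))) :=
  surprise_region_maximizes_BF_and_RB_general ν p q hp hq P Q hP hQ r hr γ D hD hk
end

section
/- Let Θ and 𝒳 be standard Borel spaces, μ a probability measure on Θ, κ a Markov kernel from Θ to 𝒳, ρ the joint distribution of (x,θ) when θ ∼ μ and x ∼ κ(θ), M the marginal of ρ on 𝒳, and x ↦ Π(·|x) a disintegration (posterior kernel) of ρ given x. Let Υ : Θ → 𝒯 be measurable, let Π_Υ = μ ∘ Υ⁻¹ be the marginal prior, and let x ↦ C(x) ⊆ 𝒯 be a measurable family of sets such that Π({θ : Υ(θ) ∈ C(x)} | x) > Π_Υ(C(x)) for M-almost every x, with both x ↦ Π_Υ(C(x)) and x ↦ Π(Υ(θ) ∈ C(x)|x) M-integrable. Then ∫_𝒳 Π_Υ(C(x)) M(dx) < ∫_Θ κ(θ)({x : Υ(θ) ∈ C(x)}) μ(dθ); that is, the prior probability that the region covers an independent false value generated from the prior is strictly less than the prior probability that it covers the true value. -/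
/-!
The probability `∫ κ θ {x | Υ θ ∈ C x} μ(dθ)` of covering the true value is the joint mass
of `{(x, θ) | Υ θ ∈ C x}`; disintegrating the joint law along `x` instead of `θ` rewrites it
as `∫ Π(Υ ⁻¹' C x | x) M(dx)`. Both sides of the claim are then `M`-integrals whose
integrands are a.e. strictly ordered, and the smaller one is finite, so the inequality
stays strict.
-/

open MeasureTheory ProbabilityTheory
open scoped ENNReal

section

variable {Θ 𝒳 : Type*} [MeasurableSpace Θ] [MeasurableSpace 𝒳]

lemma MeasureTheory.Measure.map_swap_compProd_apply (μ : Measure Θ) [SFinite μ]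
    (κ : Kernel Θ 𝒳) [IsSFiniteKernel κ] {s : Set (𝒳 × Θ)} (hs : MeasurableSet s) :
    (μ.compProd κ).map Prod.swap s = ∫⁻ θ, κ θ {x | (x, θ) ∈ s} ∂μ := by
  rw [Measure.map_apply measurable_swap hs, Measure.compProd_apply (measurable_swap hs)]
  rfl

lemma lintegral_kernel_section_eq_of_map_swap_compProd_eq
    {μ : Measure Θ} [SFinite μ] {κ : Kernel Θ 𝒳} [IsSFiniteKernel κ]
    {M : Measure 𝒳} [SFinite M] {post : Kernel 𝒳 Θ} [IsSFiniteKernel post]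
    (h : (μ.compProd κ).map Prod.swap = M.compProd post)
    {s : Set (𝒳 × Θ)} (hs : MeasurableSet s) :
    ∫⁻ θ, κ θ {x | (x, θ) ∈ s} ∂μ = ∫⁻ x, post x {θ | (x, θ) ∈ s} ∂M := by
  rw [← Measure.map_swap_compProd_apply μ κ hs, h, Measure.compProd_apply hs]
  rfl

lemma lintegral_measure_ne_top (ν : Measure Θ) [IsFiniteMeasure ν] (M : Measure 𝒳)
    [IsFiniteMeasure M] (A : 𝒳 → Set Θ) :
    ∫⁻ x, ν (A x) ∂M ≠ ∞ := by
  refine ne_top_of_le_ne_top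
    (ENNReal.mul_ne_top (measure_ne_top ν .univ) (measure_ne_top M .univ)) ?_
  calc ∫⁻ x, ν (A x) ∂M ≤ ∫⁻ _, ν .univ ∂M :=
        lintegral_mono fun x => measure_mono (Set.subset_univ _)
    _ = ν .univ * M .univ := lintegral_const _

end

theorem surprise_region_unbiased_general
    {Θ 𝒳 𝒯 : Type*} [MeasurableSpace Θ]
    [MeasurableSpace 𝒳] [MeasurableSpace 𝒯]
    (μ : Measure Θ) [IsProbabilityMeasure μ]
    (κ : Kernel Θ 𝒳) [IsMarkovKernel κ]
    (ρ : Measure (𝒳 × Θ)) (hρ : ρ = (μ.compProd κ).map Prod.swap)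
    (M : Measure 𝒳) (hM : M = ρ.fst)
    (post : Kernel 𝒳 Θ) [IsMarkovKernel post] (hpost : ρ = M.compProd post)
    (Υ : Θ → 𝒯) (hΥ : Measurable Υ)
    (C : 𝒳 → Set 𝒯) (hC : MeasurableSet {p : 𝒳 × 𝒯 | p.2 ∈ C p.1})
    (hgt : ∀ᵐ x ∂M, μ (Υ ⁻¹' (C x)) < post x (Υ ⁻¹' (C x))) :
    ∫⁻ x, μ (Υ ⁻¹' (C x)) ∂M < ∫⁻ θ, κ θ {x | Υ θ ∈ C x} ∂μ := by
  have : IsProbabilityMeasure ρ :=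
    hρ ▸ Measure.isProbabilityMeasure_map measurable_swap.aemeasurable
  have : IsProbabilityMeasure M := hM ▸ inferInstance
  have hs : MeasurableSet {p : 𝒳 × Θ | Υ p.2 ∈ C p.1} :=
    hC.preimage (measurable_fst.prodMk (hΥ.comp measurable_snd))
  calc ∫⁻ x, μ (Υ ⁻¹' (C x)) ∂M
      < ∫⁻ x, post x (Υ ⁻¹' (C x)) ∂M :=
        lintegral_strict_mono (IsProbabilityMeasure.ne_zero M)
          (Kernel.measurable_kernel_prodMk_left hs).aemeasurable
          (lintegral_measure_ne_top μ M _) hgt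
    _ = ∫⁻ θ, κ θ {x | Υ θ ∈ C x} ∂μ :=
        (lintegral_kernel_section_eq_of_map_swap_compProd_eq (hρ ▸ hpost) hs).symm

/-- Theorem 9 (unbiasedness): if the posterior content of `C(x)` strictly
exceeds its prior content for `M`-almost every `x`, then the prior probability
of covering an independent false value from the prior is strictly less than
the prior probability of covering the true value `Υ(θ)`. -/
theorem surprise_region_unbiased
    {Θ 𝒳 𝒯 : Type*} [MeasurableSpace Θ] [StandardBorelSpace Θ]
    [MeasurableSpace 𝒳] [StandardBorelSpace 𝒳] [MeasurableSpace 𝒯]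
    (μ : Measure Θ) [IsProbabilityMeasure μ]
    (κ : Kernel Θ 𝒳) [IsMarkovKernel κ]
    (ρ : Measure (𝒳 × Θ)) (hρ : ρ = (μ.compProd κ).map Prod.swap)
    (M : Measure 𝒳) (hM : M = ρ.fst)
    (post : Kernel 𝒳 Θ) [IsMarkovKernel post] (hpost : ρ = M.compProd post)
    (Υ : Θ → 𝒯) (hΥ : Measurable Υ)
    (C : 𝒳 → Set 𝒯) (hC : MeasurableSet {p : 𝒳 × 𝒯 | p.2 ∈ C p.1})
    (hgt : ∀ᵐ x ∂M, μ (Υ ⁻¹' (C x)) < post x (Υ ⁻¹' (C x))) :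
    ∫⁻ x, μ (Υ ⁻¹' (C x)) ∂M < ∫⁻ θ, κ θ {x | Υ θ ∈ C x} ∂μ :=
  surprise_region_unbiased_general μ κ ρ hρ M hM post hpost Υ hΥ C hC hgt
end

section
/- Let 𝒯 ⊆ ℝᵏ be open, let P be a probability measure on 𝒯 with density p with respect to Lebesgue measure, let Λ be a measure on 𝒯 with density λ with respect to Lebesgue measure with λ > 0 on 𝒯, and let Ψ : 𝒯 → 𝒯 be a bijection that is continuously differentiable with continuously differentiable inverse, with Jacobian J_Ψ(τ) = |det DΨ(τ)| > 0. Fix γ ∈ [0,1]. Define B_{Λ∘Ψ,γ} = {τ₀ ∈ 𝒯 : P({τ : p(τ)/(λ(Ψ(τ))J_Ψ(τ)) > p(τ₀)/(λ(Ψ(τ₀))J_Ψ(τ₀))}) ≤ γ} and B^Ψ_{Λ,γ} = {ψ₀ ∈ 𝒯 : P({τ : p(τ)J_Ψ(τ)⁻¹/λ(Ψ(τ)) > p(Ψ⁻¹(ψ₀))J_Ψ(Ψ⁻¹(ψ₀))⁻¹/λ(ψ₀)}) ≤ γ}. Then Ψ⁻¹(B^Ψ_{Λ,γ}) = B_{Λ∘Ψ,γ}.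 -/
open MeasureTheory
open scoped ENNReal

theorem ENNReal.mul_inv_div_eq_div_mul {a b c : ℝ≥0∞} (hb : b ≠ 0) (hc : c ≠ 0) :
    a * b⁻¹ / c = a / (c * b) := by
  rw [div_eq_mul_inv, div_eq_mul_inv, ENNReal.mul_inv (Or.inl hc) (Or.inr hb)]
  ring

theorem Set.sep_mem_preimage_sep_of_leftInvOn {α β : Type*} {s : Set α} {t : Set β}
    {f : α → β} {g : β → α} {Q : α → β → Prop} (hf : Set.MapsTo f s t)
    (hg : Set.LeftInvOn g f s) :
    {x ∈ s | f x ∈ {y ∈ t | Q (g y) y}} = {x ∈ s | Q x (f x)} :=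
  Set.sep_ext_iff.mpr fun x hx => by simp only [Set.mem_ofPred_eq, hf hx, hg hx, true_and]

theorem pullback_hpd_region_eq_general
    {k : ℕ} (𝒯 : Set (EuclideanSpace ℝ (Fin k)))
    (Ψ Ψinv : EuclideanSpace ℝ (Fin k) → EuclideanSpace ℝ (Fin k))
    (hbij : Set.BijOn Ψ 𝒯 𝒯) (hinv : Set.InvOn Ψinv Ψ 𝒯 𝒯)
    (p : EuclideanSpace ℝ (Fin k) → ℝ≥0∞)
    (P : Measure (EuclideanSpace ℝ (Fin k)))
    (l : EuclideanSpace ℝ (Fin k) → ℝ≥0∞)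
    (hlpos : ∀ τ ∈ 𝒯, 0 < l τ)
    (J : EuclideanSpace ℝ (Fin k) → ℝ≥0∞)
    (hJpos : ∀ τ ∈ 𝒯, 0 < J τ)
    (γ : ℝ≥0∞) :
    {τ ∈ 𝒯 | Ψ τ ∈
        {ψ₀ ∈ 𝒯 | P {τ' ∈ 𝒯 |
            p τ' * (J τ')⁻¹ / l (Ψ τ') >
              p (Ψinv ψ₀) * (J (Ψinv ψ₀))⁻¹ / l ψ₀} ≤ γ}} =
      {τ₀ ∈ 𝒯 | P {τ' ∈ 𝒯 |
          p τ' / (l (Ψ τ') * J τ') > p τ₀ / (l (Ψ τ₀) * J τ₀)} ≤ γ} := by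
  have hdensity : ∀ τ ∈ 𝒯, p τ * (J τ)⁻¹ / l (Ψ τ) = p τ / (l (Ψ τ) * J τ) := fun τ hτ =>
    ENNReal.mul_inv_div_eq_div_mul (hJpos τ hτ).ne' (hlpos _ (hbij.mapsTo hτ)).ne'
  refine (Set.sep_mem_preimage_sep_of_leftInvOn (Q := fun τ₀ ψ₀ =>
    P {τ' ∈ 𝒯 | p τ' * (J τ')⁻¹ / l (Ψ τ') > p τ₀ * (J τ₀)⁻¹ / l ψ₀} ≤ γ)
    hbij.mapsTo hinv.1).trans (Set.sep_ext_iff.mpr fun τ₀ hτ₀ => ?_)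
  rw [hdensity τ₀ hτ₀, Set.sep_ext_iff.mpr fun τ hτ => by rw [hdensity τ hτ]]

/-- Lemma 10: the pullback under `Ψ` of the `Λ`-optimal hpd-like γ-credible
region for `ψ = Ψ(τ)` equals the `(Λ∘Ψ)`-optimal hpd-like γ-credible region
for `τ`. -/
theorem pullback_hpd_region_eq
    {k : ℕ} (𝒯 : Set (EuclideanSpace ℝ (Fin k))) (hT : IsOpen 𝒯)
    (Ψ Ψinv : EuclideanSpace ℝ (Fin k) → EuclideanSpace ℝ (Fin k))
    (hbij : Set.BijOn Ψ 𝒯 𝒯) (hinv : Set.InvOn Ψinv Ψ 𝒯 𝒯)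
    (hΨ : ContDiffOn ℝ 1 Ψ 𝒯) (hΨinv : ContDiffOn ℝ 1 Ψinv 𝒯)
    (p : EuclideanSpace ℝ (Fin k) → ℝ≥0∞) (hp : Measurable p)
    (P : Measure (EuclideanSpace ℝ (Fin k))) [IsProbabilityMeasure P]
    (hP : P = volume.withDensity p)
    (l : EuclideanSpace ℝ (Fin k) → ℝ≥0∞) (hl : Measurable l)
    (hlpos : ∀ τ ∈ 𝒯, 0 < l τ)
    (J : EuclideanSpace ℝ (Fin k) → ℝ≥0∞)
    (hJ : J = fun τ => ENNReal.ofReal |(fderiv ℝ Ψ τ).det|)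
    (hJpos : ∀ τ ∈ 𝒯, 0 < J τ)
    (γ : ℝ≥0∞) (hγ : γ ≤ 1) :
    {τ ∈ 𝒯 | Ψ τ ∈
        {ψ₀ ∈ 𝒯 | P {τ' ∈ 𝒯 |
            p τ' * (J τ')⁻¹ / l (Ψ τ') >
              p (Ψinv ψ₀) * (J (Ψinv ψ₀))⁻¹ / l ψ₀} ≤ γ}} =
      {τ₀ ∈ 𝒯 | P {τ' ∈ 𝒯 |
          p τ' / (l (Ψ τ') * J τ') > p τ₀ / (l (Ψ τ₀) * J τ₀)} ≤ γ} :=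
  pullback_hpd_region_eq_general 𝒯 Ψ Ψinv hbij hinv p P l hlpos J hJpos γ
end
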